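/- arXiv:2103.08758 — 7 statements merged into one kernel-verified Lean document; each statement's English description precedes it below -/
import Mathlib

section
/- Let m,n be nonnegative integers with mn>0, and define s_i = 1 for 1 ≤ i ≤ m and s_i = -1 for m < i ≤ m+n. Define γ_1 = 0 and γ_k = γ_{k-1} + (s_{k-1}+s_k)/2 for 2 ≤ k ≤ m+n. Let β = (β_1,...,β_{m+n}) be a covariant gl(m|n)-weight, i.e. all β_i are nonnegative integers, β_1 ≥ ... ≥ β_m, β_{m+1} ≥ ... ≥ β_{m+n}, and the number of nonzero entries among β_{m+1},...,β_{m+n} is at most β_m. Define the rational function Y_β(u) = ∏_{i=1}^{m+n} ((u + s_i β_i - γ_i)/(u - γ_i))^{s_i}. Then: if Y_β(u) = 1 identically, β = (0,...,0); and if Y_β(u) ≠ 1, the smallest zero of Y_β (as a rational function of u) equals -β_1. -/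
/-- s_i = 1 for i ≤ m, s_i = -1 for i > m. -/
def sval (m i : ℕ) : ℚ := if i ≤ m then 1 else -1

/-- The rational function Y_β(u) = ∏_{i=1}^{m+n} ((u + s_i β_i - γ_i)/(u - γ_i))^{s_i}. -/
noncomputable def Ybeta (m n : ℕ) (β : ℕ → ℕ) (γ : ℕ → ℚ) : RatFunc ℚ :=
  ∏ i ∈ Finset.Icc 1 (m + n),
    ((RatFunc.X + RatFunc.C (sval m i * (β i : ℚ) - γ i)) /
      (RatFunc.X - RatFunc.C (γ i))) ^ (if i ≤ m then (1 : ℤ) else -1)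

open Polynomial Finset

lemma root_num_div_iff (P Q : ℚ[X]) (hP : P ≠ 0) (hQ : Q ≠ 0) (z : ℚ) :
    (RatFunc.num (algebraMap ℚ[X] (RatFunc ℚ) P / algebraMap ℚ[X] (RatFunc ℚ) Q)).IsRoot z ↔
      Q.rootMultiplicity z < P.rootMultiplicity z := by
  set x := algebraMap ℚ[X] (RatFunc ℚ) P / algebraMap ℚ[X] (RatFunc ℚ) Q with hx
  have hx0 : x ≠ 0 :=
    div_ne_zero (RatFunc.algebraMap_ne_zero hP) (RatFunc.algebraMap_ne_zero hQ)
  have hN : x.num ≠ 0 := RatFunc.num_ne_zero hx0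
  have hD : x.denom ≠ 0 := RatFunc.denom_ne_zero x
  have hcross : P * x.denom = Q * x.num := by
    have h1 : algebraMap ℚ[X] (RatFunc ℚ) P / algebraMap ℚ[X] (RatFunc ℚ) Q
        = algebraMap ℚ[X] (RatFunc ℚ) x.num / algebraMap ℚ[X] (RatFunc ℚ) x.denom := by
      rw [RatFunc.num_div_denom]
    rw [div_eq_div_iff (RatFunc.algebraMap_ne_zero hQ) (RatFunc.algebraMap_ne_zero hD)] at h1
    apply RatFunc.algebraMap_injective ℚ
    rw [map_mul, map_mul]
    rw [h1]
    ring
  have hrm : P.rootMultiplicity z + x.denom.rootMultiplicity z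
      = Q.rootMultiplicity z + x.num.rootMultiplicity z := by
    rw [← Polynomial.rootMultiplicity_mul (mul_ne_zero hP hD),
      ← Polynomial.rootMultiplicity_mul (mul_ne_zero hQ hN), hcross]
  have hcop : ¬(0 < x.num.rootMultiplicity z ∧ 0 < x.denom.rootMultiplicity z) := by
    rintro ⟨h1, h2⟩
    rw [Polynomial.rootMultiplicity_pos hN] at h1
    rw [Polynomial.rootMultiplicity_pos hD] at h2
    obtain ⟨a, b, hab⟩ := RatFunc.isCoprime_num_denom x
    have := congrArg (Polynomial.eval z) hab
    simp [Polynomial.IsRoot.def.mp h1, Polynomial.IsRoot.def.mp h2] at this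
  rw [← Polynomial.rootMultiplicity_pos hN]
  omega

lemma rm_prod (s : Finset ℕ) (f : ℕ → ℚ) (z : ℚ) :
    (∏ i ∈ s, (X - Polynomial.C (f i))).rootMultiplicity z
      = (s.filter (fun i => f i = z)).card := by
  have h1 : (∏ i ∈ s, (X - Polynomial.C (f i))) = ((s.val.map f).map (fun a => X - Polynomial.C a)).prod := by
    rw [Multiset.map_map]
    rfl
  have h2 : (s.filter (fun i => f i = z)).card
      = Multiset.card (Multiset.filter (fun i => z = f i) s.val) := by
    rw [Finset.card, Finset.filter_val]
    congr 1
    apply Multiset.filter_congr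
    intro x _
    exact eq_comm
  rw [← Polynomial.count_roots, h1, Polynomial.roots_multiset_prod_X_sub_C,
    Multiset.count_map, h2]

open Polynomial Finset

def aval (m : ℕ) (β : ℕ → ℕ) (i : ℕ) : ℚ := if i ≤ m then (i : ℚ) - 1 - β i else 2 * m - i
def bval (m : ℕ) (β : ℕ → ℕ) (i : ℕ) : ℚ := if i ≤ m then (i : ℚ) - 1 else (β i : ℚ) + (2 * m - i)

section claims

variable (m n : ℕ) (β : ℕ → ℕ)

-- monotonicity on the first block
lemma mono1 (hβ1 : ∀ i, 1 ≤ i → i + 1 ≤ m → β (i + 1) ≤ β i) :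
    ∀ i j, 1 ≤ i → i ≤ j → j ≤ m → β j ≤ β i := by
  intro i j hi hij hjm
  induction j with
  | zero => omega
  | succ k ih =>
    rcases Nat.eq_or_lt_of_le hij with h | h
    · rw [h]
    · exact le_trans (hβ1 k (by omega) hjm) (ih (by omega) (by omega))

lemma mono2 (hβ2 : ∀ i, m + 1 ≤ i → i + 1 ≤ m + n → β (i + 1) ≤ β i) :
    ∀ i j, m + 1 ≤ i → i ≤ j → j ≤ m + n → β j ≤ β i := by
  intro i j hi hij hjm
  induction j with
  | zero => omega
  | succ k ih =>
    rcases Nat.eq_or_lt_of_le hij with h | h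
    · rw [h]
    · exact le_trans (hβ2 k (by omega) hjm) (ih (by omega) (by omega))

lemma covb (hm : 0 < m)
    (hβ1 : ∀ i, 1 ≤ i → i + 1 ≤ m → β (i + 1) ≤ β i)
    (hβ2 : ∀ i, m + 1 ≤ i → i + 1 ≤ m + n → β (i + 1) ≤ β i)
    (hcov : ((Finset.Icc (m + 1) (m + n)).filter (fun j => β j ≠ 0)).card ≤ β m) :
    ∀ j, m + 1 ≤ j → j ≤ m + n → β j ≠ 0 → j - m ≤ β 1 := by
  intro j hj1 hj2 hj0
  have hsub : Finset.Icc (m + 1) j ⊆ (Finset.Icc (m + 1) (m + n)).filter (fun j => β j ≠ 0) := by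
    intro k hk
    simp only [Finset.mem_Icc] at hk
    simp only [Finset.mem_filter, Finset.mem_Icc]
    refine ⟨⟨hk.1, by omega⟩, ?_⟩
    have := mono2 m n β hβ2 k j hk.1 hk.2 hj2
    omega
  have hcard := Finset.card_le_card hsub
  rw [Nat.card_Icc] at hcard
  have hβm : β m ≤ β 1 := mono1 m β hβ1 1 m le_rfl hm le_rfl
  omega

lemma claimB (hm : 0 < m) (hn : 0 < n) (hb1 : 1 ≤ β 1)
    (hβ1 : ∀ i, 1 ≤ i → i + 1 ≤ m → β (i + 1) ≤ β i)
    (hβ2 : ∀ i, m + 1 ≤ i → i + 1 ≤ m + n → β (i + 1) ≤ β i)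
    (hcov : ((Finset.Icc (m + 1) (m + n)).filter (fun j => β j ≠ 0)).card ≤ β m) :
    ((Finset.Icc 1 (m + n)).filter (fun i => bval m β i = -(β 1 : ℚ))).card <
      ((Finset.Icc 1 (m + n)).filter (fun i => aval m β i = -(β 1 : ℚ))).card := by
  set z : ℚ := -(β 1 : ℚ) with hzdef
  have hzneg : z ≤ -1 := by
    rw [hzdef]
    have : (1 : ℚ) ≤ (β 1 : ℚ) := by exact_mod_cast hb1
    linarith
  have h1N : 1 ∈ (Finset.Icc 1 (m + n)).filter (fun i => aval m β i = z) := by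
    simp only [Finset.mem_filter, Finset.mem_Icc]
    simp only [aval]
    refine ⟨⟨le_rfl, by omega⟩, ?_⟩
    rw [if_pos (show 1 ≤ m from hm)]
    push_cast
    rw [hzdef]
    ring
  -- any member of the D-filter equals 2m + β 1 and has β value 0
  have hDchar : ∀ j ∈ (Finset.Icc 1 (m + n)).filter (fun i => bval m β i = z),
      j = 2 * m + β 1 ∧ β j = 0 := by
    intro j hj
    simp only [Finset.mem_filter, Finset.mem_Icc] at hj
    simp only [bval] at hj
    obtain ⟨⟨hj1, hj2⟩, hjb⟩ := hj
    have hjm : ¬ j ≤ m := by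
      intro hjm
      rw [if_pos hjm] at hjb
      have h1 : (1 : ℚ) ≤ (j : ℚ) := by exact_mod_cast hj1
      linarith [hzneg, hjb.symm.le, hjb.le]
    rw [if_neg hjm] at hjb
    -- (j:ℚ) = 2m + β1 + β j
    have hj' : (j : ℚ) = ((2 * m + β 1 + β j : ℕ) : ℚ) := by
      push_cast
      rw [hzdef] at hjb
      linarith
    have hjnat : j = 2 * m + β 1 + β j := by exact_mod_cast hj'
    have hβj : β j = 0 := by
      by_contra hne
      have := covb m n β hm hβ1 hβ2 hcov j (by omega) hj2 hne
      omega
    omega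
  by_cases hD : ((Finset.Icc 1 (m + n)).filter (fun i => bval m β i = z)) = ∅
  · rw [hD]
    simp only [Finset.card_empty]
    exact Finset.card_pos.mpr ⟨1, h1N⟩
  · obtain ⟨j, hj⟩ := Finset.nonempty_iff_ne_empty.mpr hD
    obtain ⟨hjval, hjβ⟩ := hDchar j hj
    simp only [Finset.mem_filter, Finset.mem_Icc] at hj
    -- D-filter ⊆ {j}
    have hDsub : ((Finset.Icc 1 (m + n)).filter (fun i => bval m β i = z)) ⊆ {j} := by
      intro k hk
      have := (hDchar k hk).1
      simp only [Finset.mem_singleton]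
      omega
    have hDcard : ((Finset.Icc 1 (m + n)).filter (fun i => bval m β i = z)).card ≤ 1 := by
      have := Finset.card_le_card hDsub
      simpa using this
    -- j is also in the N-filter, along with 1
    have hjN : j ∈ (Finset.Icc 1 (m + n)).filter (fun i => aval m β i = z) := by
      simp only [Finset.mem_filter, Finset.mem_Icc]
      simp only [aval]
      refine ⟨⟨hj.1.1, hj.1.2⟩, ?_⟩
      rw [if_neg (by omega : ¬ j ≤ m)]
      rw [hzdef]
      have : (j : ℚ) = 2 * (m : ℚ) + (β 1 : ℚ) := by
        rw [hjval]; push_cast; ring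
      rw [this]
      ring
    have hpair : ({1, j} : Finset ℕ) ⊆ (Finset.Icc 1 (m + n)).filter (fun i => aval m β i = z) := by
      intro k hk
      simp only [Finset.mem_insert, Finset.mem_singleton] at hk
      rcases hk with rfl | rfl
      · exact h1N
      · exact hjN
    have h2 : 2 ≤ ((Finset.Icc 1 (m + n)).filter (fun i => aval m β i = z)).card := by
      have hcard2 : ({1, j} : Finset ℕ).card = 2 := by
        rw [Finset.card_insert_of_notMem (by simp; omega), Finset.card_singleton]
      calc 2 = ({1, j} : Finset ℕ).card := hcard2.symm
        _ ≤ _ := Finset.card_le_card hpair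
    omega

lemma claimC (hm : 0 < m) (hn : 0 < n) (hb1 : 1 ≤ β 1)
    (hβ1 : ∀ i, 1 ≤ i → i + 1 ≤ m → β (i + 1) ≤ β i)
    (hβ2 : ∀ i, m + 1 ≤ i → i + 1 ≤ m + n → β (i + 1) ≤ β i)
    (hcov : ((Finset.Icc (m + 1) (m + n)).filter (fun j => β j ≠ 0)).card ≤ β m)
    (z : ℚ) (hz : z < -(β 1 : ℚ)) :
    ((Finset.Icc 1 (m + n)).filter (fun i => aval m β i = z)).card ≤
      ((Finset.Icc 1 (m + n)).filter (fun i => bval m β i = z)).card := by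
  -- members of the N-filter are > m and satisfy (i:ℚ) = 2m - z
  have hNchar : ∀ i ∈ (Finset.Icc 1 (m + n)).filter (fun i => aval m β i = z),
      m + 1 ≤ i ∧ (i : ℚ) = 2 * m - z := by
    intro i hi
    simp only [Finset.mem_filter, Finset.mem_Icc] at hi
    simp only [aval] at hi
    obtain ⟨⟨hi1, hi2⟩, hia⟩ := hi
    have him : ¬ i ≤ m := by
      intro him
      rw [if_pos him] at hia
      have hβi : β i ≤ β 1 := mono1 m β hβ1 1 i le_rfl hi1 him
      have h1 : (β i : ℚ) ≤ (β 1 : ℚ) := by exact_mod_cast hβi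
      have h2 : (1 : ℚ) ≤ (i : ℚ) := by exact_mod_cast hi1
      rw [← hia] at hz
      linarith
    rw [if_neg him] at hia
    exact ⟨by omega, by linarith⟩
  by_cases hN : ((Finset.Icc 1 (m + n)).filter (fun i => aval m β i = z)) = ∅
  · rw [hN]; simp
  · obtain ⟨i0, hi0⟩ := Finset.nonempty_iff_ne_empty.mpr hN
    obtain ⟨hi0m, hi0val⟩ := hNchar i0 hi0
    simp only [Finset.mem_filter, Finset.mem_Icc] at hi0
    have hi0mn : i0 ≤ m + n := hi0.1.2
    -- i0 ≥ 2m + β1 + 1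
    have hi0big : 2 * m + β 1 + 1 ≤ i0 := by
      have h1 : ((2 * m + β 1 : ℕ) : ℚ) < (i0 : ℚ) := by
        push_cast
        rw [hi0val]
        linarith
      have := Nat.cast_lt (α := ℚ).mp h1
      omega
    -- β (m+n) = 0
    have hβmn : β (m + n) = 0 := by
      by_contra hne
      have := covb m n β hm hβ1 hβ2 hcov (m + n) (by omega) le_rfl hne
      omega
    -- find the witness j* for the D-filter
    set S := (Finset.Icc (m + 1) (m + n)).filter (fun j => i0 + β j ≤ j) with hSdef
    have hSne : S.Nonempty := by
      refine ⟨m + n, ?_⟩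
      simp only [hSdef, Finset.mem_filter, Finset.mem_Icc]
      omega
    set js := S.min' hSne with hjs
    have hjsS : js ∈ S := Finset.min'_mem S hSne
    simp only [hSdef, Finset.mem_filter, Finset.mem_Icc] at hjsS
    obtain ⟨⟨hjs1, hjs2⟩, hjs3⟩ := hjsS
    have hjeq : i0 + β js = js := by
      by_contra hne
      have hlt : i0 + β js + 1 ≤ js := by omega
      have hjm2 : m + 2 ≤ js := by omega
      have hprev : js - 1 ∉ S := by
        intro hmem
        have := Finset.min'_le S (js - 1) hmem
        omega
      simp only [hSdef, Finset.mem_filter, Finset.mem_Icc, not_and, not_le] at hprev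
      have hprev' := hprev ⟨by omega, by omega⟩
      -- js - 1 < i0 + β (js-1), and js - 1 ≥ i0, so β (js - 1) ≥ 1
      have hβprev : β (js - 1) ≠ 0 := by omega
      have := covb m n β hm hβ1 hβ2 hcov (js - 1) (by omega) (by omega) hβprev
      omega
    -- js witnesses the D-filter
    have hjD : js ∈ (Finset.Icc 1 (m + n)).filter (fun i => bval m β i = z) := by
      simp only [Finset.mem_filter, Finset.mem_Icc]
      simp only [bval]
      refine ⟨⟨by omega, hjs2⟩, ?_⟩
      rw [if_neg (by omega : ¬ js ≤ m)]
      have hβjs : (β js : ℚ) = (js : ℚ) - (i0 : ℚ) := by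
        have : ((β js : ℕ) : ℚ) = ((js - i0 : ℕ) : ℚ) := by congr 1; omega
        rw [this]
        push_cast [show i0 ≤ js by omega]
        ring
      rw [hβjs, hi0val]
      ring
    -- N-filter ⊆ {i0}
    have hNsub : ((Finset.Icc 1 (m + n)).filter (fun i => aval m β i = z)) ⊆ {i0} := by
      intro k hk
      obtain ⟨hk1, hk2⟩ := hNchar k hk
      simp only [Finset.mem_singleton]
      have : (k : ℚ) = (i0 : ℚ) := by rw [hk2, hi0val]
      exact_mod_cast this
    calc ((Finset.Icc 1 (m + n)).filter (fun i => aval m β i = z)).card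
        ≤ ({i0} : Finset ℕ).card := Finset.card_le_card hNsub
      _ = 1 := Finset.card_singleton i0
      _ ≤ _ := Finset.card_pos.mpr ⟨js, hjD⟩

end claims

lemma gamma_eq (m n : ℕ) (hm : 0 < m) (γ : ℕ → ℚ) (hγ1 : γ 1 = 0)
    (hγ : ∀ k, 2 ≤ k → k ≤ m + n → γ k = γ (k - 1) + (sval m (k - 1) + sval m k) / 2) :
    ∀ i, 1 ≤ i → i ≤ m + n → γ i = if i ≤ m then (i : ℚ) - 1 else 2 * m - i := by
  intro i
  induction i with
  | zero => omega
  | succ k ih =>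
    intro h1 h2
    by_cases hk : k = 0
    · subst hk
      rw [hγ1, if_pos (show 1 ≤ m from hm)]
      norm_num
    · have hrec := hγ (k + 1) (by omega) h2
      simp only [Nat.add_sub_cancel] at hrec
      rw [ih (by omega) (by omega)] at hrec
      rw [hrec]
      simp only [sval]
      by_cases hc1 : k + 1 ≤ m
      · simp only [if_pos hc1, if_pos (show k ≤ m by omega)]
        push_cast
        ring
      · by_cases hc2 : k ≤ m
        · have hkm : k = m := by omega
          subst hkm
          simp only [if_pos hc2, if_neg hc1]
          push_cast
          ring
        · simp only [if_neg hc2, if_neg hc1]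
          push_cast
          ring

lemma Ybeta_eq (m n : ℕ) (hm : 0 < m) (β : ℕ → ℕ) (γ : ℕ → ℚ)
    (hγ2 : ∀ i, 1 ≤ i → i ≤ m + n → γ i = if i ≤ m then (i : ℚ) - 1 else 2 * m - i) :
    Ybeta m n β γ =
      algebraMap ℚ[X] (RatFunc ℚ) (∏ i ∈ Finset.Icc 1 (m + n), (X - Polynomial.C (aval m β i))) /
        algebraMap ℚ[X] (RatFunc ℚ) (∏ i ∈ Finset.Icc 1 (m + n), (X - Polynomial.C (bval m β i))) := by
  unfold Ybeta
  rw [map_prod, map_prod, ← Finset.prod_div_distrib]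
  apply Finset.prod_congr rfl
  intro i hi
  simp only [Finset.mem_Icc] at hi
  have hmap : ∀ c : ℚ, algebraMap ℚ[X] (RatFunc ℚ) (X - Polynomial.C c)
      = RatFunc.X - RatFunc.C c := fun c => by
    rw [map_sub, RatFunc.algebraMap_X, RatFunc.algebraMap_C]
  rw [hmap, hmap, hγ2 i hi.1 hi.2]
  by_cases hc : i ≤ m
  · rw [if_pos hc, if_pos hc, zpow_one]
    simp only [sval, aval, bval, if_pos hc]
    have h1 : (1:ℚ) * (β i : ℚ) - ((i : ℚ) - 1) = -(((i : ℚ) - 1 - β i)) := by ring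
    rw [h1, map_neg, ← sub_eq_add_neg]
  · rw [if_neg hc, if_neg hc]
    simp only [sval, aval, bval, if_neg hc]
    have h1 : (-1:ℚ) * (β i : ℚ) - (2 * (m:ℚ) - i) = -(((β i : ℚ) + (2 * (m:ℚ) - i))) := by
      ring
    rw [h1, map_neg, ← sub_eq_add_neg, zpow_neg_one, inv_div]

open Polynomial Finset in
theorem stmt0 (m n : ℕ) (hm : 0 < m) (hn : 0 < n)
    (β : ℕ → ℕ) (γ : ℕ → ℚ)
    (hβ1 : ∀ i, 1 ≤ i → i + 1 ≤ m → β (i + 1) ≤ β i)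
    (hβ2 : ∀ i, m + 1 ≤ i → i + 1 ≤ m + n → β (i + 1) ≤ β i)
    (hcov : ((Finset.Icc (m + 1) (m + n)).filter (fun j => β j ≠ 0)).card ≤ β m)
    (hγ1 : γ 1 = 0)
    (hγ : ∀ k, 2 ≤ k → k ≤ m + n → γ k = γ (k - 1) + (sval m (k - 1) + sval m k) / 2) :
    (Ybeta m n β γ = 1 → ∀ i, 1 ≤ i → i ≤ m + n → β i = 0) ∧
    (Ybeta m n β γ ≠ 1 →
      (Ybeta m n β γ).num.IsRoot (-(β 1 : ℚ)) ∧
      ∀ z : ℚ, (Ybeta m n β γ).num.IsRoot z → -(β 1 : ℚ) ≤ z) := by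
  have hγ2 := gamma_eq m n hm γ hγ1 hγ
  have hYB := Ybeta_eq m n hm β γ hγ2
  have hPmon : (∏ i ∈ Finset.Icc 1 (m + n), (X - Polynomial.C (aval m β i))).Monic :=
    Polynomial.monic_prod_of_monic _ _ (fun i _ => Polynomial.monic_X_sub_C _)
  have hQmon : (∏ i ∈ Finset.Icc 1 (m + n), (X - Polynomial.C (bval m β i))).Monic :=
    Polynomial.monic_prod_of_monic _ _ (fun i _ => Polynomial.monic_X_sub_C _)
  have hroot : ∀ z : ℚ, (Ybeta m n β γ).num.IsRoot z ↔
      ((Finset.Icc 1 (m + n)).filter (fun i => bval m β i = z)).card <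
        ((Finset.Icc 1 (m + n)).filter (fun i => aval m β i = z)).card := by
    intro z
    rw [hYB, root_num_div_iff _ _ hPmon.ne_zero hQmon.ne_zero, rm_prod, rm_prod]
  have hzero : β 1 = 0 → ∀ i, 1 ≤ i → i ≤ m + n → β i = 0 := by
    intro hb i hi1 hi2
    by_cases hc : i ≤ m
    · have := mono1 m β hβ1 1 i le_rfl hi1 hc
      omega
    · by_contra hne
      have hβm : β m ≤ β 1 := mono1 m β hβ1 1 m le_rfl hm le_rfl
      have hmem : i ∈ (Finset.Icc (m + 1) (m + n)).filter (fun j => β j ≠ 0) := by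
        simp only [Finset.mem_filter, Finset.mem_Icc]
        exact ⟨⟨by omega, hi2⟩, hne⟩
      have := Finset.card_pos.mpr ⟨i, hmem⟩
      omega
  have hone : β 1 = 0 → Ybeta m n β γ = 1 := by
    intro hb
    rw [hYB]
    have hPQ : (∏ i ∈ Finset.Icc 1 (m + n), (X - Polynomial.C (aval m β i)))
        = ∏ i ∈ Finset.Icc 1 (m + n), (X - Polynomial.C (bval m β i)) := by
      apply Finset.prod_congr rfl
      intro i hi
      simp only [Finset.mem_Icc] at hi
      have hβi : β i = 0 := hzero hb i hi.1 hi.2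
      simp [aval, bval, hβi]
    rw [hPQ, div_self (RatFunc.algebraMap_ne_zero hQmon.ne_zero)]
  refine ⟨?_, ?_⟩
  · intro hY i hi1 hi2
    by_cases hb : β 1 = 0
    · exact hzero hb i hi1 hi2
    · exfalso
      have hr := (hroot (-(β 1 : ℚ))).mpr (claimB m n β hm hn (by omega) hβ1 hβ2 hcov)
      rw [hY] at hr
      simp [Polynomial.IsRoot] at hr
  · intro hY
    have hb : 1 ≤ β 1 := by
      rcases Nat.eq_zero_or_pos (β 1) with h | h
      · exact absurd (hone h) hY
      · exact h
    refine ⟨(hroot _).mpr (claimB m n β hm hn hb hβ1 hβ2 hcov), ?_⟩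
    intro w hw
    by_contra hlt
    push_neg at hlt
    have h1 := (hroot w).mp hw
    have h2 := claimC m n β hm hn hb hβ1 hβ2 hcov w hlt
    omega
end

section
/- With the setup of covariant gl(m|n)-weights and the rational functions Y_β(u) = ∏_{i=1}^{m+n} ((u + s_i β_i - γ_i)/(u - γ_i))^{s_i}: if β and β' are both covariant gl(m|n)-weights and Y_β(u) = Y_{β'}(u) as rational functions, then β = β'. -/
/-- β is a covariant gl(m|n)-weight. -/
def CovariantWeight (m n : ℕ) (β : ℕ → ℕ) : Prop :=
  (∀ i, 1 ≤ i → i + 1 ≤ m → β (i + 1) ≤ β i) ∧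
  (∀ i, m + 1 ≤ i → i + 1 ≤ m + n → β (i + 1) ≤ β i) ∧
  ((Finset.Icc (m + 1) (m + n)).filter (fun j => β j ≠ 0)).card ≤ β m

namespace Stmt1Aux
open Polynomial

open Polynomial

variable (m n : ℕ) (γ : ℕ → ℚ) (β : ℕ → ℕ)

lemma gammaVal (hγ1 : γ 1 = if 0 < m then (0 : ℚ) else -1)
    (hγ : ∀ k, 2 ≤ k → k ≤ m + n → γ k = γ (k - 1) + (sval m (k - 1) + sval m k) / 2) :
    ∀ k, 1 ≤ k → k ≤ m + n → γ k = if k ≤ m then (k:ℚ) - 1 else 2*(m:ℚ) - k := by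
  intro k hk1
  induction k, hk1 using Nat.le_induction with
  | base =>
    intro _
    rcases Nat.eq_zero_or_pos m with hm | hm
    · subst hm
      simp only [hγ1]
      norm_num
    · have h1m : 1 ≤ m := hm
      simp only [hγ1, if_pos hm, if_pos h1m]
      norm_num
  | succ k hk ih =>
    intro hkmn
    have hrec := hγ (k+1) (by omega) hkmn
    simp only [Nat.add_sub_cancel] at hrec
    rw [hrec, ih (by omega)]
    by_cases h2 : k ≤ m
    · by_cases h1 : k + 1 ≤ m
      · simp only [sval, if_pos h2, if_pos h1]
        push_cast
        ring
      · simp only [sval, if_pos h2, if_neg h1]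
        have hkm : k = m := by omega
        subst hkm
        push_cast
        ring
    · have h1 : ¬ (k+1 ≤ m) := by omega
      simp only [sval, if_neg h2, if_neg h1]
      push_cast
      ring

/-- numerator polynomial -/
noncomputable def NP : ℚ[X] :=
  ∏ i ∈ Finset.Icc 1 (m+n), (X - C (if i ≤ m then γ i - (β i : ℚ) else γ i))

/-- denominator polynomial -/
noncomputable def DP : ℚ[X] :=
  ∏ i ∈ Finset.Icc 1 (m+n), (X - C (if i ≤ m then γ i else γ i + (β i : ℚ)))

lemma Ybeta_eq :
    Ybeta m n β γ = algebraMap ℚ[X] (RatFunc ℚ) (NP m n γ β) /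
      algebraMap ℚ[X] (RatFunc ℚ) (DP m n γ β) := by
  unfold Ybeta NP DP
  rw [map_prod, map_prod, ← Finset.prod_div_distrib]
  apply Finset.prod_congr rfl
  intro i _
  by_cases him : i ≤ m
  · simp only [sval, if_pos him, zpow_one, map_sub, RatFunc.algebraMap_X,
      RatFunc.algebraMap_C, one_mul, map_sub]
    ring
  · simp only [sval, if_neg him, zpow_neg, zpow_one, map_sub, RatFunc.algebraMap_X,
      RatFunc.algebraMap_C, neg_mul, one_mul]
    rw [inv_div]
    congr 1
    rw [map_neg, map_add]
    ring

lemma NP_monic : (NP m n γ β).Monic := by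
  apply monic_prod_of_monic
  intro i _
  exact monic_X_sub_C _

lemma DP_monic : (DP m n γ β).Monic := by
  apply monic_prod_of_monic
  intro i _
  exact monic_X_sub_C _

lemma NP_roots : (NP m n γ β).roots =
    (Finset.Icc 1 (m+n)).val.map (fun i => if i ≤ m then γ i - (β i : ℚ) else γ i) := by
  unfold NP
  rw [Finset.prod_eq_multiset_prod]
  have h := roots_multiset_prod_X_sub_C ((Finset.Icc 1 (m+n)).val.map
    (fun i => if i ≤ m then γ i - (β i : ℚ) else γ i))
  rw [Multiset.map_map] at h
  simpa [Function.comp] using h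

lemma DP_roots : (DP m n γ β).roots =
    (Finset.Icc 1 (m+n)).val.map (fun i => if i ≤ m then γ i else γ i + (β i : ℚ)) := by
  unfold DP
  rw [Finset.prod_eq_multiset_prod]
  have h := roots_multiset_prod_X_sub_C ((Finset.Icc 1 (m+n)).val.map
    (fun i => if i ≤ m then γ i else γ i + (β i : ℚ)))
  rw [Multiset.map_map] at h
  simpa [Function.comp] using h



variable (m n : ℕ)

/-- multiset of numerator-extra roots -/
def MA (β : ℕ → ℕ) : Multiset ℚ := (Finset.Icc 1 m).val.map (fun i : ℕ => (i:ℚ) - 1 - (β i : ℚ))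
/-- multiset of denominator-extra roots -/
def MD (β : ℕ → ℕ) : Multiset ℚ :=
  (Finset.Icc (m+1) (m+n)).val.map (fun j : ℕ => 2*(m:ℚ) - (j:ℚ) + (β j : ℚ))
/-- number of nonzero entries in the second part -/
def rr (β : ℕ → ℕ) : ℕ := ((Finset.Icc (m + 1) (m + n)).filter (fun j => β j ≠ 0)).card

variable {m n}
variable {β : ℕ → ℕ} (hβ : CovariantWeight m n β)

lemma anti1 (hβ : CovariantWeight m n β) :
    ∀ i j, 1 ≤ i → i ≤ j → j ≤ m → β j ≤ β i := by
  intro i j h1 hij hjm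
  induction j with
  | zero => omega
  | succ k ih =>
    rcases Nat.lt_or_ge i (k+1) with hlt | hge
    · exact le_trans (hβ.1 k (by omega) (by omega)) (ih (by omega) (by omega))
    · have : i = k + 1 := by omega
      subst this; rfl

lemma anti2 (hβ : CovariantWeight m n β) :
    ∀ i j, m + 1 ≤ i → i ≤ j → j ≤ m + n → β j ≤ β i := by
  intro i j h1 hij hjm
  induction j with
  | zero => omega
  | succ k ih =>
    rcases Nat.lt_or_ge i (k+1) with hlt | hge
    · exact le_trans (hβ.2.1 k (by omega) (by omega)) (ih (by omega) (by omega))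
    · have : i = k + 1 := by omega
      subst this; rfl

lemma le_mr (hβ : CovariantWeight m n β) {j : ℕ} (h1 : m + 1 ≤ j) (h2 : j ≤ m + n)
    (h3 : β j ≠ 0) : j ≤ m + rr m n β := by
  have hsub : Finset.Icc (m+1) j ⊆ (Finset.Icc (m + 1) (m + n)).filter (fun k => β k ≠ 0) := by
    intro k hk
    simp only [Finset.mem_Icc] at hk
    simp only [Finset.mem_filter, Finset.mem_Icc]
    refine ⟨⟨hk.1, by omega⟩, ?_⟩
    have := anti2 hβ k j hk.1 hk.2 h2
    omega
  have := Finset.card_le_card hsub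
  rw [Nat.card_Icc] at this
  unfold rr
  omega

lemma beta_zero (hβ : CovariantWeight m n β) {j : ℕ} (h1 : m + rr m n β < j)
    (h2 : j ≤ m + n) : β j = 0 := by
  by_contra hne
  have := le_mr hβ (by omega) h2 hne
  omega

lemma nodup_MD (hβ : CovariantWeight m n β) : (MD m n β).Nodup := by
  unfold MD
  apply Multiset.Nodup.map_on _ (Finset.Icc (m+1) (m+n)).nodup
  intro x hx y hy hxy
  have hx' : m+1 ≤ x ∧ x ≤ m+n := by simpa using hx
  have hy' : m+1 ≤ y ∧ y ≤ m+n := by simpa using hy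
  -- strict anti: if x < y then value x > value y
  rcases Nat.lt_trichotomy x y with hlt | heq | hgt
  · exfalso
    have hb := anti2 hβ x y hx'.1 (le_of_lt hlt) hy'.2
    have hxq : (x:ℚ) < y := by exact_mod_cast hlt
    have hbb : (β y : ℚ) ≤ β x := by exact_mod_cast hb
    nlinarith [hxy]
  · exact heq
  · exfalso
    have hb := anti2 hβ y x hy'.1 (le_of_lt hgt) hx'.2
    have hxq : (y:ℚ) < x := by exact_mod_cast hgt
    have hbb : (β x : ℚ) ≤ β y := by exact_mod_cast hb
    nlinarith [hxy]

lemma mem_MA_bound (hβ : CovariantWeight m n β) {c : ℚ} (hc : c ∈ MA m β) :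
    c ≤ (m:ℚ) - 1 - rr m n β := by
  obtain ⟨i, hi, rfl⟩ := Multiset.mem_map.mp hc
  have hi' : 1 ≤ i ∧ i ≤ m := by simpa using hi
  have h1 : β m ≤ β i := anti1 hβ i m hi'.1 hi'.2 le_rfl
  have h2 : rr m n β ≤ β m := hβ.2.2
  have hiq : (i:ℚ) ≤ m := by exact_mod_cast hi'.2
  have : (rr m n β : ℚ) ≤ β i := by exact_mod_cast le_trans h2 h1
  linarith

lemma mem_MD_bound {c : ℚ} (hc : c ∈ MD m n β) : (m:ℚ) - n ≤ c := by
  obtain ⟨j, hj, rfl⟩ := Multiset.mem_map.mp hc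
  have hj' : m+1 ≤ j ∧ j ≤ m+n := by simpa using hj
  have hjq : (j:ℚ) ≤ m + n := by exact_mod_cast hj'.2
  have : (0:ℚ) ≤ β j := by positivity
  linarith

/-- Key lemma: a discrepancy forces rr β' < rr β. -/
lemma key {β' : ℕ → ℕ} (hβ : CovariantWeight m n β) (hβ' : CovariantWeight m n β')
    (E : MA m β + MD m n β' = MA m β' + MD m n β)
    {c : ℚ} (hc1 : c ∈ MD m n β') (hc2 : c ∉ MD m n β) :
    rr m n β' < rr m n β := by
  by_contra hcon
  push_neg at hcon  -- rr β ≤ rr β'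
  -- c ∈ MA β'
  have hcA : c ∈ MA m β' := by
    have : c ∈ MA m β + MD m n β' := Multiset.mem_add.mpr (Or.inr hc1)
    rw [E] at this
    rcases Multiset.mem_add.mp this with h | h
    · exact h
    · exact absurd h hc2
  obtain ⟨i, hi, hci⟩ := Multiset.mem_map.mp hcA
  have hi' : 1 ≤ i ∧ i ≤ m := by simpa using hi
  have hbound : c ≤ (m:ℚ) - 1 - rr m n β' := mem_MA_bound hβ' hcA
  have hlow : (m:ℚ) - n ≤ c := mem_MD_bound hc1
  -- define jn
  set jn : ℕ := 2*m + 1 + β' i - i with hjn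
  have hile : i ≤ 2*m + 1 + β' i := by omega
  have hjnq : (jn:ℚ) = 2*m + 1 + β' i - i := by
    have : (jn:ℚ) = ((2*m + 1 + β' i : ℕ) : ℚ) - i := by
      rw [hjn]; push_cast [Nat.cast_sub hile]; ring
    rw [this]; push_cast; ring_nf
  have hcjn : c = 2*m - (jn:ℚ) := by rw [hjnq, ← hci]; push_cast; ring
  have hjn2 : jn ≤ m + n := by
    have : (jn:ℚ) ≤ m + n := by rw [hcjn] at hlow; linarith
    exact_mod_cast this
  have hjn1 : m + 1 + rr m n β' ≤ jn := by
    have : (m:ℚ) + 1 + rr m n β' ≤ jn := by rw [hcjn] at hbound; linarith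
    exact_mod_cast this
  have hz : β jn = 0 := beta_zero hβ (by omega) hjn2
  have : c ∈ MD m n β := by
    apply Multiset.mem_map.mpr
    refine ⟨jn, ?_, ?_⟩
    · simp only [Finset.mem_val, Finset.mem_Icc]; omega
    · rw [hz, hcjn]; push_cast; ring
  exact hc2 this

lemma MD_eq {β' : ℕ → ℕ} (hβ : CovariantWeight m n β) (hβ' : CovariantWeight m n β')
    (E : MA m β + MD m n β' = MA m β' + MD m n β) :
    MD m n β = MD m n β' := by
  have E' : MA m β' + MD m n β = MA m β + MD m n β' := E.symm
  by_cases h1 : ∀ c ∈ MD m n β', c ∈ MD m n β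
  · have hle : MD m n β' ≤ MD m n β :=
      (Multiset.le_iff_subset (nodup_MD hβ')).mpr h1
    have hcard : Multiset.card (MD m n β) ≤ Multiset.card (MD m n β') := by
      unfold MD; simp
    exact (Multiset.eq_of_le_of_card_le hle hcard).symm
  · push_neg at h1
    obtain ⟨c, hc1, hc2⟩ := h1
    have k1 := key hβ hβ' E hc1 hc2
    by_cases h2 : ∀ c ∈ MD m n β, c ∈ MD m n β'
    · have hle : MD m n β ≤ MD m n β' :=
        (Multiset.le_iff_subset (nodup_MD hβ)).mpr h2
      have hcard : Multiset.card (MD m n β') ≤ Multiset.card (MD m n β) := by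
        unfold MD; simp
      exact Multiset.eq_of_le_of_card_le hle hcard
    · push_neg at h2
      obtain ⟨d, hd1, hd2⟩ := h2
      have k2 := key hβ' hβ E' hd1 hd2
      omega

/-- Extraction: equal multiset images of monotone maps over Icc agree pointwise. -/
lemma extract (f g : ℕ → ℚ) : ∀ (a b : ℕ),
    (∀ i j, a ≤ i → i ≤ j → j ≤ b → f i ≤ f j) →
    (∀ i j, a ≤ i → i ≤ j → j ≤ b → g i ≤ g j) →
    (Finset.Icc a b).val.map f = (Finset.Icc a b).val.map g →
    ∀ i, a ≤ i → i ≤ b → f i = g i := by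
  intro a b
  induction b with
  | zero =>
    intro hf hg h i hi1 hi2
    have : i = 0 := by omega
    subst this
    have ha : a = 0 := by omega
    subst ha
    simp [Finset.Icc_self] at h
    exact h
  | succ b ih =>
    intro hf hg h i hi1 hi2
    by_cases hab : a ≤ b + 1
    swap
    · omega
    rcases Nat.lt_or_ge b (a) with hba | hba
    · -- a = b+1, singleton
      have : a = b + 1 := by omega
      subst this
      have : i = b + 1 := by omega
      subst this
      simp [Finset.Icc_self] at h
      exact h
    · -- split off top element b+1
      have hsplit : (Finset.Icc a (b+1)).val = (b+1) ::ₘ (Finset.Icc a b).val := by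
        have : Finset.Icc a (b+1) = insert (b+1) (Finset.Icc a b) := by
          ext x; simp [Finset.mem_Icc, Finset.mem_insert]; omega
        rw [this, Finset.insert_val, Multiset.ndinsert_of_notMem (by simp [Finset.mem_Icc])]
      rw [hsplit, Multiset.map_cons, Multiset.map_cons] at h
      -- top values equal
      have htop : f (b+1) = g (b+1) := by
        have hfm : f (b+1) ∈ (Finset.Icc a b).val.map g ∨ f (b+1) = g (b+1) := by
          have : f (b+1) ∈ g (b+1) ::ₘ (Finset.Icc a b).val.map g := by
            rw [← h]; exact Multiset.mem_cons_self _ _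
          rcases Multiset.mem_cons.mp this with h' | h'
          · exact Or.inr h'
          · exact Or.inl h'
        have hgm : g (b+1) ∈ (Finset.Icc a b).val.map f ∨ g (b+1) = f (b+1) := by
          have : g (b+1) ∈ f (b+1) ::ₘ (Finset.Icc a b).val.map f := by
            rw [h]; exact Multiset.mem_cons_self _ _
          rcases Multiset.mem_cons.mp this with h' | h'
          · exact Or.inr h'
          · exact Or.inl h'
        rcases hfm with hfm | hfm
        swap; · exact hfm
        rcases hgm with hgm | hgm
        swap; · exact hgm.symm
        obtain ⟨x, hx, hxe⟩ := Multiset.mem_map.mp hfm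
        obtain ⟨y, hy, hye⟩ := Multiset.mem_map.mp hgm
        have hx' : a ≤ x ∧ x ≤ b := by simpa using hx
        have hy' : a ≤ y ∧ y ≤ b := by simpa using hy
        have h1 : g x ≤ g (b+1) := hg x (b+1) hx'.1 (by omega) le_rfl
        have h2 : f y ≤ f (b+1) := hf y (b+1) hy'.1 (by omega) le_rfl
        linarith [hxe ▸ h1, hye ▸ h2]
      rw [htop] at h
      have hrest := Multiset.cons_inj_right (g (b+1)) |>.mp h  -- hope name right
      rcases Nat.lt_or_ge b i with hbi | hbi
      · have : i = b + 1 := by omega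
        subst this; exact htop
      · exact ih (fun i j h1 h2 h3 => hf i j h1 h2 (by omega))
          (fun i j h1 h2 h3 => hg i j h1 h2 (by omega)) hrest i hi1 hbi


end Stmt1Aux

open Stmt1Aux Polynomial in
theorem stmt1 (m n : ℕ) (γ : ℕ → ℚ) (β β' : ℕ → ℕ)
    (hγ1 : γ 1 = if 0 < m then (0 : ℚ) else -1)
    (hγ : ∀ k, 2 ≤ k → k ≤ m + n → γ k = γ (k - 1) + (sval m (k - 1) + sval m k) / 2)
    (hβ : CovariantWeight m n β) (hβ' : CovariantWeight m n β')
    (h : Ybeta m n β γ = Ybeta m n β' γ) :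
    ∀ i, 1 ≤ i → i ≤ m + n → β i = β' i := by
  have hgv := gammaVal m n γ hγ1 hγ
  -- from RatFunc equality to polynomial root multiset equality
  rw [Ybeta_eq m n γ β, Ybeta_eq m n γ β'] at h
  have hDne : ∀ b : ℕ → ℕ, algebraMap ℚ[X] (RatFunc ℚ) (DP m n γ b) ≠ 0 := fun b =>
    (map_ne_zero_iff _ (RatFunc.algebraMap_injective ℚ)).mpr (DP_monic m n γ b).ne_zero
  rw [div_eq_div_iff (hDne β) (hDne β'), ← map_mul, ← map_mul] at h
  have hpq : NP m n γ β * DP m n γ β' = NP m n γ β' * DP m n γ β :=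
    RatFunc.algebraMap_injective ℚ h
  have hroots := congrArg Polynomial.roots hpq
  rw [Polynomial.roots_mul (((NP_monic m n γ β).mul (DP_monic m n γ β')).ne_zero),
      Polynomial.roots_mul (((NP_monic m n γ β').mul (DP_monic m n γ β)).ne_zero),
      NP_roots, NP_roots, DP_roots, DP_roots] at hroots
  -- split the index interval
  set s1 := (Finset.Icc 1 m).val with hs1
  set s2 := (Finset.Icc (m+1) (m+n)).val with hs2
  have hsplit : (Finset.Icc 1 (m+n)).val = s1 + s2 := by
    have hd : Disjoint (Finset.Icc 1 m) (Finset.Icc (m+1) (m+n)) := by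
      simp [Finset.disjoint_left]; omega
    have : Finset.Icc 1 (m+n) = (Finset.Icc 1 m).disjUnion (Finset.Icc (m+1) (m+n)) hd := by
      ext x; simp [Finset.mem_disjUnion]; omega
    rw [this]; rfl
  rw [hsplit] at hroots
  simp only [Multiset.map_add] at hroots
  -- identify the pieces
  have hm1 : ∀ i ∈ s1, 1 ≤ i ∧ i ≤ m := by
    intro i hi; rw [hs1, Finset.mem_val, Finset.mem_Icc] at hi; exact hi
  have hm2 : ∀ j ∈ s2, m+1 ≤ j ∧ j ≤ m+n := by
    intro j hj; rw [hs2, Finset.mem_val, Finset.mem_Icc] at hj; exact hj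
  have eN1 : ∀ b : ℕ → ℕ,
      s1.map (fun i => if i ≤ m then γ i - (b i : ℚ) else γ i) = MA m b := by
    intro b
    apply Multiset.map_congr rfl
    intro i hi
    obtain ⟨h1, h2⟩ := hm1 i hi
    rw [if_pos h2, hgv i h1 (by omega), if_pos h2]
  have eN2 : ∀ b : ℕ → ℕ,
      s2.map (fun i => if i ≤ m then γ i - (b i : ℚ) else γ i) = s2.map γ := by
    intro b
    apply Multiset.map_congr rfl
    intro j hj
    obtain ⟨h1, h2⟩ := hm2 j hj
    rw [if_neg (by omega)]
  have eD1 : ∀ b : ℕ → ℕ,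
      s1.map (fun i => if i ≤ m then γ i else γ i + (b i : ℚ)) = s1.map γ := by
    intro b
    apply Multiset.map_congr rfl
    intro i hi
    obtain ⟨h1, h2⟩ := hm1 i hi
    rw [if_pos h2]
  have eD2 : ∀ b : ℕ → ℕ,
      s2.map (fun i => if i ≤ m then γ i else γ i + (b i : ℚ)) = MD m n b := by
    intro b
    apply Multiset.map_congr rfl
    intro j hj
    obtain ⟨h1, h2⟩ := hm2 j hj
    rw [if_neg (by omega), hgv j (by omega) h2, if_neg (by omega)]
  rw [eN1 β, eN1 β', eN2 β, eN2 β', eD1 β, eD1 β', eD2 β, eD2 β'] at hroots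
  -- cancel the common parts
  have E : MA m β + MD m n β' = MA m β' + MD m n β := by
    have h2 : (s1.map γ + s2.map γ) + (MA m β + MD m n β') =
        (s1.map γ + s2.map γ) + (MA m β' + MD m n β) := by
      calc (s1.map γ + s2.map γ) + (MA m β + MD m n β')
          = MA m β + s2.map γ + (s1.map γ + MD m n β') := by abel
        _ = MA m β' + s2.map γ + (s1.map γ + MD m n β) := hroots
        _ = (s1.map γ + s2.map γ) + (MA m β' + MD m n β) := by abel
    exact add_left_cancel h2
  -- combinatorial core
  have hMD : MD m n β = MD m n β' := MD_eq hβ hβ' E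
  have hMA : MA m β = MA m β' := by
    rw [hMD] at E
    exact add_right_cancel E
  -- extract pointwise values
  have hmpart : ∀ i, 1 ≤ i → i ≤ m → β i = β' i := by
    have hext := extract (fun i : ℕ => (i:ℚ) - 1 - (β i : ℚ))
      (fun i : ℕ => (i:ℚ) - 1 - (β' i : ℚ)) 1 m
      (by
        intro i j h1 h2 h3
        have hb : β j ≤ β i := anti1 hβ i j h1 h2 h3
        have hb' : (β j : ℚ) ≤ β i := by exact_mod_cast hb
        have hij : (i:ℚ) ≤ j := by exact_mod_cast h2
        linarith)
      (by
        intro i j h1 h2 h3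
        have hb : β' j ≤ β' i := anti1 hβ' i j h1 h2 h3
        have hb' : (β' j : ℚ) ≤ β' i := by exact_mod_cast hb
        have hij : (i:ℚ) ≤ j := by exact_mod_cast h2
        linarith)
      hMA
    intro i h1 h2
    have h5 := hext i h1 h2
    have : (β i : ℚ) = β' i := by linarith
    exact_mod_cast this
  have hnpart : ∀ j, m+1 ≤ j → j ≤ m+n → β j = β' j := by
    have hMD2 : s2.map (fun j : ℕ => (j:ℚ) - (β j : ℚ)) =
        s2.map (fun j : ℕ => (j:ℚ) - (β' j : ℚ)) := by
      have hc := congrArg (Multiset.map (fun x : ℚ => 2*(m:ℚ) - x)) hMD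
      unfold MD at hc
      rw [Multiset.map_map, Multiset.map_map] at hc
      calc s2.map (fun j : ℕ => (j:ℚ) - (β j : ℚ))
          = s2.map ((fun x : ℚ => 2*(m:ℚ) - x) ∘
              (fun j : ℕ => 2*(m:ℚ) - (j:ℚ) + (β j : ℚ))) := by
            apply Multiset.map_congr rfl
            intro x _
            simp only [Function.comp]
            ring
        _ = s2.map ((fun x : ℚ => 2*(m:ℚ) - x) ∘
              (fun j : ℕ => 2*(m:ℚ) - (j:ℚ) + (β' j : ℚ))) := hc
        _ = s2.map (fun j : ℕ => (j:ℚ) - (β' j : ℚ)) := by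
            apply Multiset.map_congr rfl
            intro x _
            simp only [Function.comp]
            ring
    have hext := extract (fun j : ℕ => (j:ℚ) - (β j : ℚ))
      (fun j : ℕ => (j:ℚ) - (β' j : ℚ)) (m+1) (m+n)
      (by
        intro i j h1 h2 h3
        have hb : β j ≤ β i := anti2 hβ i j h1 h2 h3
        have hb' : (β j : ℚ) ≤ β i := by exact_mod_cast hb
        have hij : (i:ℚ) ≤ j := by exact_mod_cast h2
        linarith)
      (by
        intro i j h1 h2 h3
        have hb : β' j ≤ β' i := anti2 hβ' i j h1 h2 h3
        have hb' : (β' j : ℚ) ≤ β' i := by exact_mod_cast hb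
        have hij : (i:ℚ) ≤ j := by exact_mod_cast h2
        linarith)
      hMD2
    intro j h1 h2
    have h5 := hext j h1 h2
    have : (β j : ℚ) = β' j := by linarith
    exact_mod_cast this
  intro i h1 h2
  by_cases him : i ≤ m
  · exact hmpart i h1 him
  · exact hnpart i (by omega) h2
end

section
/- Let μ(u) ∈ 1 + u^{-1}ℂ[[u^{-1}]] and let λ(z) = a_m z^{-m} + a_{m+1} z^{-m-1} + ... be a nonzero element of z^{-1}ℂ[[z^{-1}]] with a_m ≠ 0, and let c ∈ ℂ be a nonzero constant. Suppose ν(u) ∈ 1 + u^{-1}ℂ[[u^{-1}]] satisfies the formal identity 0 = (u - z - c)λ(z)ν(u) + c·λ(u)ν(u) - (u - z)μ(u)λ(z) in ℂ[[u^{-1}, z^{-1}]]. Then ν(u) = μ(u)·(u - a)/(u - a - c) where a = a_{m+1}/a_m. -/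
open PowerSeries

/-- μ, ν ∈ 1 + u^{-1}ℂ[[u^{-1}]] (as power series in X = u^{-1}), λ(z) = Σ_k a_k z^{-k}
nonzero with leading coefficient a_m ≠ 0 (m ≥ 1), c ≠ 0.  The formal identity
0 = (u - z - c)λ(z)ν(u) + c·λ(u)ν(u) - (u - z)μ(u)λ(z) in ℂ[[u^{-1}, z^{-1}]] is encoded
coefficient-wise (coefficient of u^{-k} z^{-l}, plus the coefficient of u^{+1} z^{-l}).
Then ν(u) = μ(u)·(u - a)/(u - a - c) with a = a_{m+1}/a_m, i.e.
ν·(1 - (a + c)X) = μ·(1 - aX). -/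
theorem stmt4 (μ ν : PowerSeries ℂ) (a : ℕ → ℂ) (c : ℂ) (m : ℕ)
    (hμ0 : PowerSeries.constantCoeff μ = 1)
    (hν0 : PowerSeries.constantCoeff ν = 1)
    (ha0 : a 0 = 0) (hm : 1 ≤ m) (ham : a m ≠ 0) (hlt : ∀ k, k < m → a k = 0)
    (hc : c ≠ 0)
    (hpos : ∀ l : ℕ, a l * PowerSeries.coeff 0 ν - PowerSeries.coeff 0 μ * a l = 0)
    (hid : ∀ k l : ℕ,
      0 = a l * PowerSeries.coeff (k + 1) ν - a (l + 1) * PowerSeries.coeff k ν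
          - c * (a l * PowerSeries.coeff k ν)
          + (if l = 0 then
              c * ∑ j ∈ Finset.range (k + 1), a j * PowerSeries.coeff (k - j) ν
            else 0)
          - (PowerSeries.coeff (k + 1) μ * a l - PowerSeries.coeff k μ * a (l + 1))) :
    ν * (1 - PowerSeries.C (a (m + 1) / a m + c) * PowerSeries.X) =
      μ * (1 - PowerSeries.C (a (m + 1) / a m) * PowerSeries.X) := by
  have hm0 : m ≠ 0 := by omega
  ext n
  simp only [mul_sub, mul_one, map_sub, ← mul_assoc, mul_comm _ (PowerSeries.C _),
    PowerSeries.coeff_C_mul]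
  cases n with
  | zero =>
      simp [PowerSeries.coeff_zero_eq_constantCoeff, hμ0, hν0]
  | succ k =>
      have h := hid k m
      rw [if_neg hm0] at h
      rw [PowerSeries.coeff_succ_mul_X, PowerSeries.coeff_succ_mul_X, PowerSeries.coeff_C_mul,
        PowerSeries.coeff_C_mul]
      field_simp
      linear_combination -h
end

section
/- In Y(gl(1|1)), set d_1(u) = t_{11}(u) and d_2(u) = t_{22}(u) - t_{21}(u)t_{11}(u)^{-1}t_{12}(u). Using the relations t_{12}(u)t_{11}(u+1) = t_{11}(u)t_{12}(u+1) and [t_{12}(u+1), t_{21}(u)] = -t_{22}(u+1)t_{11}(u) + t_{22}(u)t_{11}(u+1), one has the identity t_{12}(u+1)t_{21}(u) = -t_{22}(u+1)t_{11}(u) + d_2(u)d_1(u)^{-1}t_{11}(u)t_{11}(u+1). -/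
/-- Abstract form of Lemma 4.3 for Y(gl(1|1)).  In any ring (e.g. the coefficient ring of
the relevant formal series over Y(gl(1|1))), write t11, t12, t21, t22 for the series
t_{ij}(u) and t11', t12', t21', t22' for the shifted series t_{ij}(u+1); t11 is invertible
with inverse t11inv (its leading term is 1).  Set d1 = t11 and
d2 = t22 - t21·t11⁻¹·t12.  The relations t_{12}(u)t_{11}(u+1) = t_{11}(u)t_{12}(u+1) and
[t_{12}(u+1), t_{21}(u)] = t_{12}(u+1)t_{21}(u) + t_{21}(u)t_{12}(u+1)
  = -t_{22}(u+1)t_{11}(u) + t_{22}(u)t_{11}(u+1)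
imply
t_{12}(u+1)t_{21}(u) = -t_{22}(u+1)t_{11}(u) + d_2(u)d_1(u)^{-1}t_{11}(u)t_{11}(u+1). -/
theorem stmt6 {R : Type*} [Ring R]
    (t11 t12 t21 t22 t11' t12' t21' t22' t11inv : R)
    (hinv1 : t11 * t11inv = 1) (hinv2 : t11inv * t11 = 1)
    (hA : t12 * t11' = t11 * t12')
    (hB : t12' * t21 + t21 * t12' = -(t22' * t11) + t22 * t11') :
    t12' * t21 = -(t22' * t11) + ((t22 - t21 * t11inv * t12) * t11inv) * (t11 * t11') := by
  have key : t11inv * t12 * t11' = t12' := by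
    have h := congrArg (t11inv * ·) hA
    simp only [← mul_assoc, hinv2, one_mul] at h
    exact h
  have h1 : t12' * t21 = -(t22' * t11) + t22 * t11' - t21 * t12' := by
    rw [eq_sub_iff_add_eq, hB]
  rw [h1]
  rw [sub_mul, sub_mul]
  have h2 : t22 * t11inv * (t11 * t11') = t22 * t11' := by
    rw [← mul_assoc, mul_assoc t22, hinv2, mul_one]
  have h3 : t21 * t11inv * t12 * t11inv * (t11 * t11') = t21 * t12' := by
    rw [← mul_assoc, mul_assoc _ t11inv t11, hinv2, mul_one, mul_assoc, mul_assoc,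
      ← mul_assoc t11inv, key]
  rw [h2, h3]
  exact add_sub_assoc _ _ _
end

section
/- Let Γ and Γ' be Young diagrams (partitions) with Γ' ⊆ Γ, and let m, n ≥ 0. Consider semi-standard Young tableaux of skew shape Γ/Γ' with entries in {1,...,m+n}: entries weakly increase along rows and columns, entries from {1,...,m} strictly increase along columns, and entries from {m+1,...,m+n} strictly increase along rows. Define an elementary move on such tableaux as replacing a single entry k by k+1 or a single entry k+1 by k (for some k), provided the result is again a semi-standard tableau of the same shape. Then any two semi-standard Young tableaux of shape Γ/Γ' with entries in {1,...,m+n} are connected by a finite sequence of elementary moves. -/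
/-- `(i, j)` is a cell of the skew diagram Γ/Γ' (row i, column j, 0-indexed columns). -/
def IsCell (Γ Γ' : ℕ → ℕ) (c : ℕ × ℕ) : Prop :=
  Γ' c.1 ≤ c.2 ∧ c.2 < Γ c.1

/-- Semi-standard (super/hook) Young tableau of skew shape Γ/Γ' with entries in
{1,…,m+n}: entries weakly increase along rows and columns; entries ≤ m strictly
increase along columns; entries > m strictly increase along rows.  Entries outside
the shape are normalized to 0. -/
def IsSSYT (m n : ℕ) (Γ Γ' : ℕ → ℕ) (T : ℕ × ℕ → ℕ) : Prop :=
  (∀ c : ℕ × ℕ, ¬ IsCell Γ Γ' c → T c = 0) ∧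
  (∀ c : ℕ × ℕ, IsCell Γ Γ' c → 1 ≤ T c ∧ T c ≤ m + n) ∧
  (∀ i j : ℕ, IsCell Γ Γ' (i, j) → IsCell Γ Γ' (i, j + 1) →
    T (i, j) ≤ T (i, j + 1) ∧ (T (i, j) = T (i, j + 1) → T (i, j) ≤ m)) ∧
  (∀ i j : ℕ, IsCell Γ Γ' (i, j) → IsCell Γ Γ' (i + 1, j) →
    T (i, j) ≤ T (i + 1, j) ∧ (T (i, j) = T (i + 1, j) → m < T (i, j)))

/-- Elementary move: change a single entry by ±1, staying semi-standard. -/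
def ElemMove (m n : ℕ) (Γ Γ' : ℕ → ℕ) (T T' : ℕ × ℕ → ℕ) : Prop :=
  IsSSYT m n Γ Γ' T ∧ IsSSYT m n Γ Γ' T' ∧
  ∃ c : ℕ × ℕ, IsCell Γ Γ' c ∧ (T' c = T c + 1 ∨ T' c + 1 = T c) ∧
    ∀ c' : ℕ × ℕ, c' ≠ c → T' c' = T c'

lemma elemMove_symm (m n : ℕ) (Γ Γ' : ℕ → ℕ) {T T' : ℕ × ℕ → ℕ}
    (h : ElemMove m n Γ Γ' T T') : ElemMove m n Γ Γ' T' T := by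
  obtain ⟨h1, h2, c, hc, hpm, hrest⟩ := h
  exact ⟨h2, h1, c, hc, by omega, fun c' h => (hrest c' h).symm⟩

/-- Decreasing move at the first (reading order) discrepancy between `T` and `S`,
when `T` is larger there. -/
lemma dec_move (m n : ℕ) (Γ Γ' : ℕ → ℕ) (T S : ℕ × ℕ → ℕ)
    (hT : IsSSYT m n Γ Γ' T) (hS : IsSSYT m n Γ Γ' S)
    (i0 j0 : ℕ) (hcell : IsCell Γ Γ' (i0, j0))
    (hlt : S (i0, j0) < T (i0, j0))
    (hup : ∀ i, i < i0 → ∀ j, T (i, j) = S (i, j))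
    (hleft : ∀ j, j < j0 → T (i0, j) = S (i0, j)) :
    ElemMove m n Γ Γ' T (Function.update T (i0, j0) (T (i0, j0) - 1)) := by
  obtain ⟨hT0, hTb, hTr, hTc⟩ := hT
  obtain ⟨hS0, hSb, hSr, hSc⟩ := hS
  have hs1 : 1 ≤ S (i0, j0) := (hSb _ hcell).1
  have hv2 : 2 ≤ T (i0, j0) := by omega
  have hvub : T (i0, j0) ≤ m + n := (hTb _ hcell).2
  have hT1 : IsSSYT m n Γ Γ' (Function.update T (i0, j0) (T (i0, j0) - 1)) := by
    refine ⟨?_, ?_, ?_, ?_⟩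
    · intro c hc
      rw [Function.update_of_ne (by rintro rfl; exact hc hcell)]
      exact hT0 c hc
    · intro c hc
      by_cases h : c = (i0, j0)
      · subst h; rw [Function.update_self]; omega
      · rw [Function.update_of_ne h]; exact hTb c hc
    · intro i j h1 h2
      by_cases hA : (i, j) = (i0, j0)
      · rw [Prod.mk.injEq] at hA; obtain ⟨rfl, rfl⟩ := hA
        rw [Function.update_self,
          Function.update_of_ne (by intro h; rw [Prod.mk.injEq] at h; omega)]
        obtain ⟨h3, h4⟩ := hTr i j h1 h2
        exact ⟨by omega, fun h => by omega⟩
      · by_cases hB : (i, j + 1) = (i0, j0)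
        · rw [Prod.mk.injEq] at hB; obtain ⟨rfl, hj⟩ := hB
          subst hj
          rw [Function.update_self,
            Function.update_of_ne (by intro h; rw [Prod.mk.injEq] at h; omega)]
          obtain ⟨h3, h4⟩ := hSr i j h1 h2
          rw [hleft j (by omega)]
          refine ⟨by omega, fun h => ?_⟩
          exact le_trans (le_of_eq rfl) (h4 (by omega))
        · rw [Function.update_of_ne hA, Function.update_of_ne hB]
          exact hTr i j h1 h2
    · intro i j h1 h2
      by_cases hA : (i, j) = (i0, j0)
      · rw [Prod.mk.injEq] at hA; obtain ⟨rfl, rfl⟩ := hA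
        rw [Function.update_self,
          Function.update_of_ne (by intro h; rw [Prod.mk.injEq] at h; omega)]
        obtain ⟨h3, h4⟩ := hTc i j h1 h2
        exact ⟨by omega, fun h => by omega⟩
      · by_cases hB : (i + 1, j) = (i0, j0)
        · rw [Prod.mk.injEq] at hB; obtain ⟨hi, rfl⟩ := hB
          subst hi
          rw [Function.update_self,
            Function.update_of_ne (by intro h; rw [Prod.mk.injEq] at h; omega)]
          obtain ⟨h3, h4⟩ := hSc i j h1 h2
          rw [hup i (by omega) j]
          refine ⟨by omega, fun h => ?_⟩
          have h5 := h4 (by omega)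
          omega
        · rw [Function.update_of_ne hA, Function.update_of_ne hB]
          exact hTc i j h1 h2
  exact ⟨⟨hT0, hTb, hTr, hTc⟩, hT1, (i0, j0), hcell,
    Or.inr (by rw [Function.update_self]; omega),
    fun c' h => Function.update_of_ne h _ _⟩

theorem stmt8 (m n : ℕ) (Γ Γ' : ℕ → ℕ)
    (hΓ : Antitone Γ) (hΓ' : Antitone Γ') (hsub : ∀ i, Γ' i ≤ Γ i)
    (hfin : ∃ N, ∀ i, N ≤ i → Γ i = 0) :
    ∀ T T' : ℕ × ℕ → ℕ, IsSSYT m n Γ Γ' T → IsSSYT m n Γ Γ' T' →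
      Relation.ReflTransGen (ElemMove m n Γ Γ') T T' := by
  classical
  obtain ⟨N, hN⟩ := hfin
  intro T S hT hS
  set box : Finset (ℕ × ℕ) := Finset.range N ×ˢ Finset.range (Γ 0 + 1) with hbox
  have hmem : ∀ c, IsCell Γ Γ' c → c ∈ box := by
    rintro ⟨i, j⟩ ⟨h1, h2⟩
    simp only [hbox, Finset.mem_product, Finset.mem_range]
    constructor
    · by_contra h; push_neg at h; have := hN i h; simp at h2 ⊢; omega
    · have := hΓ (Nat.zero_le i); simp at h2 ⊢; omega
  suffices H : ∀ k (T S : ℕ × ℕ → ℕ), IsSSYT m n Γ Γ' T → IsSSYT m n Γ Γ' S →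
      (∑ c ∈ box, Nat.dist (T c) (S c)) = k →
      Relation.ReflTransGen (ElemMove m n Γ Γ') T S by
    exact H _ T S hT hS rfl
  intro k
  induction k using Nat.strong_induction_on with
  | _ k IH =>
    intro T S hT hS hk
    by_cases hTS : T = S
    · subst hTS; exact Relation.ReflTransGen.refl
    · have hne : ∃ i, ∃ j, T (i, j) ≠ S (i, j) := by
        by_contra h; push_neg at h
        exact hTS (funext fun c => h c.1 c.2)
      set i0 := Nat.find hne with hi0def
      have hi0 := Nat.find_spec hne
      set j0 := Nat.find hi0 with hj0def
      have hj0 : T (i0, j0) ≠ S (i0, j0) := Nat.find_spec hi0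
      have hup : ∀ i, i < i0 → ∀ j, T (i, j) = S (i, j) := by
        intro i hi j
        have := Nat.find_min hne hi
        push_neg at this
        exact this j
      have hleft : ∀ j, j < j0 → T (i0, j) = S (i0, j) := by
        intro j hj
        have := Nat.find_min hi0 hj
        push_neg at this
        exact this
      have hcell : IsCell Γ Γ' (i0, j0) := by
        by_contra h
        exact hj0 (by rw [hT.1 _ h, hS.1 _ h])
      rcases Nat.lt_or_ge (S (i0, j0)) (T (i0, j0)) with hlt | hge
      · have hmove := dec_move m n Γ Γ' T S hT hS i0 j0 hcell hlt hup hleft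
        set T1 := Function.update T (i0, j0) (T (i0, j0) - 1) with hT1def
        have hsum : (∑ c ∈ box, Nat.dist (T1 c) (S c)) < k := by
          rw [← hk]
          apply Finset.sum_lt_sum
          · intro c _
            by_cases h : c = (i0, j0)
            · subst h
              rw [hT1def, Function.update_self]
              simp [Nat.dist]; omega
            · rw [hT1def, Function.update_of_ne h]
          · refine ⟨(i0, j0), hmem _ hcell, ?_⟩
            rw [hT1def, Function.update_self]
            have h1 : 1 ≤ S (i0, j0) := (hS.2.1 _ hcell).1
            simp [Nat.dist]; omega
        exact Relation.ReflTransGen.head hmove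
          (IH _ hsum T1 S hmove.2.1 hS rfl)
      · have hlt' : T (i0, j0) < S (i0, j0) := by omega
        have hmove := dec_move m n Γ Γ' S T hS hT i0 j0 hcell hlt'
          (fun i hi j => (hup i hi j).symm) (fun j hj => (hleft j hj).symm)
        set S1 := Function.update S (i0, j0) (S (i0, j0) - 1) with hS1def
        have hsum : (∑ c ∈ box, Nat.dist (T c) (S1 c)) < k := by
          rw [← hk]
          apply Finset.sum_lt_sum
          · intro c _
            by_cases h : c = (i0, j0)
            · subst h
              rw [hS1def, Function.update_self]
              simp [Nat.dist]; omega
            · rw [hS1def, Function.update_of_ne h]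
          · refine ⟨(i0, j0), hmem _ hcell, ?_⟩
            rw [hS1def, Function.update_self]
            have h1 : 1 ≤ T (i0, j0) := (hT.2.1 _ hcell).1
            simp [Nat.dist]; omega
        exact Relation.ReflTransGen.tail
          (IH _ hsum T S1 hT hmove.2.1 rfl) (elemMove_symm m n Γ Γ' hmove)
end

section
/- Let Λ be a λ/μ-admissible Gelfand–Tsetlin tableau and suppose both Λ and Λ + δ_{ki} are admissible for some m+1 ≤ k ≤ m+n-1 and i ≤ m'. Then the admissibility of Λ+δ_{ki} together with condition (2) force λ_{(k+1)',i} - λ_{k'i} = 1 and λ_{k'i} - λ_{(k-1)',i} = 0, and moreover l_{kj} - l_{ki} - 1 ≠ 0 for all j ≤ m', j ≠ i, where l_{kj} = λ_{k'j} + r - j + 1. -/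
/-- λ/μ-admissibility of a Gelfand–Tsetlin tableau Λ (rows r,…,r+m+n; row k has k
entries Λ k 1,…,Λ k k).  Write m' = r + m.  Conditions (1)–(6) of the paper. -/
def GTAdm (r m n : ℕ) (lam mu : ℕ → ℤ) (Λ : ℕ → ℕ → ℤ) : Prop :=
  (∀ j, 1 ≤ j → j ≤ r + m + n → Λ (r + m + n) j = lam j) ∧
  (∀ j, 1 ≤ j → j ≤ r → Λ r j = mu j) ∧
  (∀ k j, r + m + 1 ≤ k → k ≤ r + m + n → 1 ≤ j → j ≤ r + m →
    Λ k j - Λ (k - 1) j = 0 ∨ Λ k j - Λ (k - 1) j = 1) ∧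
  (∀ k, r + m + 1 ≤ k → k ≤ r + m + n →
    (((Finset.Icc (r + m) k).filter (fun j => 0 < Λ k j)).card : ℤ) ≤ Λ k (r + m)) ∧
  (Λ (r + m + 1) (r + m) = 0 → Λ (r + m + 1) (r + m) - Λ (r + m) (r + m) = 0) ∧
  (∀ k j, r + m + 1 ≤ k → k ≤ r + m + n → 1 ≤ j → j + 1 ≤ r + m →
    Λ k (j + 1) ≤ Λ k j) ∧
  (∀ k j, r ≤ k → 1 ≤ j →
    ((j ≤ k ∧ k + 1 ≤ r + m) ∨ (r + m + 1 ≤ j ∧ j ≤ k ∧ k + 1 ≤ r + m + n)) →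
    Λ k j ≤ Λ (k + 1) j ∧ Λ (k + 1) (j + 1) ≤ Λ k j)

/-- If Λ and Λ + δ_{ki} are both λ/μ-admissible, m+1 ≤ k ≤ m+n-1, 1 ≤ i ≤ m' = r+m,
then λ_{(k+1)',i} - λ_{k'i} = 1, λ_{k'i} - λ_{(k-1)',i} = 0, and
l_{kj} - l_{ki} - 1 ≠ 0 for all 1 ≤ j ≤ m' with j ≠ i, where
l_{kj} = λ_{k'j} + r - j + 1 (k' = r + k). -/
theorem stmt11 (r m n : ℕ) (lam mu : ℕ → ℤ) (Λ : ℕ → ℕ → ℤ) (k i : ℕ)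
    (hk1 : m + 1 ≤ k) (hk2 : k ≤ m + n - 1)
    (hi1 : 1 ≤ i) (hi2 : i ≤ r + m)
    (hΛ : GTAdm r m n lam mu Λ)
    (hΛ' : GTAdm r m n lam mu
      (fun p q => if p = r + k ∧ q = i then Λ p q + 1 else Λ p q)) :
    Λ (r + k + 1) i - Λ (r + k) i = 1 ∧
    Λ (r + k) i - Λ (r + k - 1) i = 0 ∧
    ∀ j, 1 ≤ j → j ≤ r + m → j ≠ i →
      (Λ (r + k) j + (r : ℤ) - (j : ℤ) + 1)
        - (Λ (r + k) i + (r : ℤ) - (i : ℤ) + 1) - 1 ≠ 0 := by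
  obtain ⟨h1, h2, h3, h4, h5, h6, h7⟩ := hΛ
  obtain ⟨h1', h2', h3', h4', h5', h6', h7'⟩ := hΛ'
  have hn : 2 ≤ n := by omega
  have e1 := h3 (r + k + 1) i (by omega) (by omega) hi1 hi2
  have e1' := h3' (r + k + 1) i (by omega) (by omega) hi1 hi2
  have e2 := h3 (r + k) i (by omega) (by omega) hi1 hi2
  have e2' := h3' (r + k) i (by omega) (by omega) hi1 hi2
  have hne1 : ¬(r + k + 1 = r + k ∧ i = i) := by omega
  have heq1 : (r + k + 1 - 1 = r + k ∧ i = i) := by omega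
  have hne2 : ¬(r + k - 1 = r + k ∧ i = i) := by omega
  have heq2 : (r + k = r + k ∧ i = i) := by omega
  have f1 : (r + k + 1 = r + k) = False := eq_false (by omega)
  have f2 : (r + k - 1 = r + k) = False := eq_false (by omega)
  simp only [Nat.add_sub_cancel, and_true, true_and, and_self, f1, f2,
    if_true, if_false, ite_true, ite_false] at e1' e2'
  simp only [Nat.add_sub_cancel] at e1
  have hc1 : Λ (r + k + 1) i - Λ (r + k) i = 1 := by omega
  have hc2 : Λ (r + k) i - Λ (r + k - 1) i = 0 := by omega
  refine ⟨hc1, hc2, ?_⟩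
  -- row r+k is antitone on [1, r+m]
  have mono : ∀ a b, 1 ≤ a → a ≤ b → b ≤ r + m → Λ (r + k) b ≤ Λ (r + k) a := by
    intro a b ha hab
    induction b, hab using Nat.le_induction with
    | base => intro _; exact le_rfl
    | succ b hab ih =>
      intro hb
      have w1 := h6 (r + k) b (by omega) (by omega) (by omega) (by omega)
      have w2 := ih (by omega)
      omega
  intro j hj1 hj2 hji
  rcases lt_or_gt_of_ne hji with h | h
  · -- j < i : Λ_{i-1} ≥ Λ_i + 1 from admissibility of Λ', then monotonicity
    have hstep := h6' (r + k) (i - 1) (by omega) (by omega) (by omega) (by omega)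
    have hii : i - 1 + 1 = i := by omega
    rw [hii] at hstep
    have hne3 : ¬(r + k = r + k ∧ i - 1 = i) := by omega
    have f3 : (i - 1 = i) = False := eq_false (by omega)
    simp only [and_true, true_and, and_self, f3, if_true, if_false,
      ite_true, ite_false] at hstep
    have := mono j (i - 1) hj1 (by omega) (by omega)
    have hij : (j : ℤ) ≤ (i : ℤ) - 1 := by omega
    omega
  · have := mono i j hi1 (by omega) hj2
    have : (i : ℤ) < (j : ℤ) := by exact_mod_cast h
    omega
end

section
/- Let V be a finite-dimensional complex vector space and let D be a commuting family of linear operators on V. Suppose V admits a basis (ξ_α) indexed by a finite set A, such that each ξ_α is a joint eigenvector of D, and the joint eigenvalue functions χ_α : D → ℂ are pairwise distinct. Let X be a set of additional linear operators on V such that for every α ∈ A and every β ∈ A adjacent to α (for some fixed connected adjacency relation on A), some operator in X maps ξ_α to a nonzero multiple of ξ_β plus a linear combination of basis vectors with joint eigenvalues different from χ_β. Then the algebra generated by D ∪ X acts irreducibly on V. -/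
/-- Abstract irreducibility criterion.  V is a finite-dimensional complex vector space
with a basis (b α)_{α ∈ A} of joint eigenvectors of a commuting family D, whose joint
eigenvalue functions χ α are pairwise distinct.  E is a connected adjacency relation on
A, and for each edge E α β some operator x ∈ X sends b α to a nonzero multiple of b β
plus a combination of basis vectors with joint eigenvalue different from χ β.  Then any
subspace invariant under D and X is ⊥ or ⊤, i.e. the algebra generated by D ∪ X acts
irreducibly. -/
theorem stmt14 {V : Type*} [AddCommGroup V] [Module ℂ V] [FiniteDimensional ℂ V]
    {A : Type*} [Fintype A] (b : Module.Basis A ℂ V)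
    (D X : Set (Module.End ℂ V))
    (hcomm : ∀ d ∈ D, ∀ d' ∈ D, d * d' = d' * d)
    (χ : A → Module.End ℂ V → ℂ)
    (heig : ∀ d ∈ D, ∀ α : A, d (b α) = χ α d • b α)
    (hdist : ∀ α β : A, α ≠ β → ∃ d ∈ D, χ α d ≠ χ β d)
    (E : A → A → Prop)
    (hconn : ∀ α β : A, Relation.ReflTransGen E α β)
    (hmove : ∀ α β : A, E α β → ∃ x ∈ X,
      b.repr (x (b α)) β ≠ 0 ∧
      ∀ γ : A, γ ≠ β → χ γ = χ β → b.repr (x (b α)) γ = 0) :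
    ∀ W : Submodule ℂ V,
      (∀ d ∈ D, ∀ v ∈ W, d v ∈ W) → (∀ x ∈ X, ∀ v ∈ W, x v ∈ W) →
      W ≠ ⊥ → W = ⊤ := by
  classical
  intro W hDW hXW hne
  -- Projection lemma: project onto the β-eigenline using polynomials in D.
  have key : ∀ v ∈ W, ∀ β : A, b.repr v β ≠ 0 → b β ∈ W := by
    intro v hv β hβ
    -- choose separating operators
    have hsep : ∀ γ : A, ∃ d : Module.End ℂ V,
        γ ≠ β → d ∈ D ∧ χ γ d ≠ χ β d := by
      intro γ
      by_cases h : γ = β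
      · exact ⟨0, fun hc => absurd h hc⟩
      · obtain ⟨d, hd, hne'⟩ := hdist γ β h
        exact ⟨d, fun _ => ⟨hd, hne'⟩⟩
    choose e he using hsep
    -- the projecting operator factors and their eigenvalues
    set q : A → Module.End ℂ V :=
      fun γ => (χ β (e γ) - χ γ (e γ))⁻¹ • (e γ - χ γ (e γ) • 1) with hq
    set c : A → A → ℂ :=
      fun γ δ => (χ β (e γ) - χ γ (e γ))⁻¹ * (χ δ (e γ) - χ γ (e γ)) with hc
    have hqW : ∀ γ : A, γ ≠ β → ∀ w ∈ W, q γ w ∈ W := by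
      intro γ hγ w hw
      have hd := (he γ hγ).1
      refine W.smul_mem _ ?_
      have h1 : (e γ - χ γ (e γ) • 1) w = e γ w - χ γ (e γ) • w := by
        simp [LinearMap.sub_apply]
      rw [h1]
      exact W.sub_mem (hDW _ hd w hw) (W.smul_mem _ hw)
    have hqb : ∀ γ : A, γ ≠ β → ∀ δ : A, q γ (b δ) = c γ δ • b δ := by
      intro γ hγ δ
      have hd := (he γ hγ).1
      have h1 : (e γ - χ γ (e γ) • 1) (b δ) = (χ δ (e γ) - χ γ (e γ)) • b δ := by
        simp [LinearMap.sub_apply, heig _ hd δ, sub_smul]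
      simp [hq, h1, smul_smul, hc]
    -- the partially projected vectors
    set F : Finset A → V :=
      fun t => ∑ δ : A, ((∏ γ ∈ t, c γ δ) * b.repr v δ) • b δ with hF
    have hF0 : F ∅ = v := by
      simp only [hF, Finset.prod_empty, one_mul]
      exact b.sum_repr v
    have hstep : ∀ (γ : A) (t : Finset A), γ ∉ t → γ ≠ β →
        q γ (F t) = F (insert γ t) := by
      intro γ t hγt hγβ
      simp only [hF, map_sum, map_smul]
      refine Finset.sum_congr rfl fun δ _ => ?_
      rw [hqb γ hγβ δ, Finset.prod_insert hγt, smul_smul]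
      congr 1
      ring
    set s : Finset A := Finset.univ.erase β with hs
    have hFW : ∀ t : Finset A, t ⊆ s → F t ∈ W := by
      intro t
      induction t using Finset.induction_on with
      | empty => intro _; rw [hF0]; exact hv
      | insert γ t hγt ih =>
        intro hsub
        have hγβ : γ ≠ β := Finset.ne_of_mem_erase (hsub (Finset.mem_insert_self γ t))
        have htsub : t ⊆ s := fun x hx => hsub (Finset.mem_insert_of_mem hx)
        rw [← hstep γ t hγt hγβ]
        exact hqW γ hγβ _ (ih htsub)
    have hFs : F s = (b.repr v β) • b β := by
      simp only [hF]
      rw [Finset.sum_eq_single β]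
      · have h1 : ∀ γ ∈ s, c γ β = 1 := by
          intro γ hγ
          have hγβ : γ ≠ β := Finset.ne_of_mem_erase hγ
          have hne' := (he γ hγβ).2
          have h2 : χ β (e γ) - χ γ (e γ) ≠ 0 := sub_ne_zero.mpr (Ne.symm hne')
          simp [hc, inv_mul_cancel₀ h2]
        rw [Finset.prod_congr rfl h1]
        simp
      · intro δ _ hδ
        have hδs : δ ∈ s := Finset.mem_erase.mpr ⟨hδ, Finset.mem_univ δ⟩
        have h0 : (∏ γ ∈ s, c γ δ) = 0 := by
          apply Finset.prod_eq_zero hδs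
          simp [hc]
        rw [h0]
        simp
      · intro h; exact absurd (Finset.mem_univ β) h
    have hmem : (b.repr v β) • b β ∈ W := hFs ▸ hFW s (le_refl s)
    have := W.smul_mem (b.repr v β)⁻¹ hmem
    rwa [smul_smul, inv_mul_cancel₀ hβ, one_smul] at this
  -- W contains some basis vector
  obtain ⟨v, hvW, hv0⟩ := Submodule.exists_mem_ne_zero_of_ne_bot hne
  have hr : b.repr v ≠ 0 := fun h => hv0 (by
    have := congrArg b.repr.symm h
    simpa using this)
  obtain ⟨α₀, hα₀⟩ := Finsupp.ne_iff.mp hr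
  have hbα₀ : b α₀ ∈ W := key v hvW α₀ (by simpa using hα₀)
  -- propagate along the connected relation
  have hall : ∀ α : A, b α ∈ W := by
    intro α
    have h := hconn α₀ α
    induction h with
    | refl => exact hbα₀
    | @tail γ δ _ hE ih =>
      obtain ⟨x, hxX, hx0, _⟩ := hmove γ δ hE
      exact key (x (b γ)) (hXW x hxX _ ih) δ hx0
  -- conclude
  rw [eq_top_iff, ← b.span_eq, Submodule.span_le]
  rintro _ ⟨α, rfl⟩
  exact hall α
end
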